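/- Let A = (n, Σ, μ, γ) be the hypothesis MTA built from sets X ⊆ T_Σ, Y ⊆ C_Σ (with □ ∈ Y) via μ(σ)·H_{X,Y} = H_{σ(X,...,X),Y} and γ = H_{X,□}. If z is a Σ-tree with ‖A‖(z) ≠ f(z), then z has a subtree σ(τ₁,...,τ_k) such that (i) H_{τ_j,Y} = μ(τ_j)·H_{X,Y} for every j ∈ [k], and (ii) H_{σ(τ₁,...,τ_k),c} ≠ μ(σ(τ₁,...,τ_k))·H_{X,c} for some c ∈ Y. -/
import Mathlib


/-- Σ-trees over a ranked alphabet. -/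
inductive RTree (Sig : Type) (rk : Sig → ℕ) : Type
  | node (σ : Sig) (ts : Fin (rk σ) → RTree Sig rk) : RTree Sig rk

/-- The set of subtrees of a Σ-tree. -/
def subtrees {Sig : Type} {rk : Sig → ℕ} : RTree Sig rk → Set (RTree Sig rk)
  | .node σ ts => insert (.node σ ts) (⋃ l, subtrees (ts l))

/-- Σ-contexts. -/
inductive Ctxt (Sig : Type) (rk : Sig → ℕ) : Type
  | hole : Ctxt Sig rk
  | node (σ : Sig) (pos : Fin (rk σ)) (sub : Fin (rk σ) → RTree Sig rk)
      (c : Ctxt Sig rk) : Ctxt Sig rk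

/-- Concatenation `c[t]`. -/
def plug {Sig : Type} {rk : Sig → ℕ} : Ctxt Sig rk → RTree Sig rk → RTree Sig rk
  | .hole, t => t
  | .node σ p sub c, t => .node σ (Function.update sub p (plug c t))

/-- Extension of the tree representation `μ` to trees. -/
def mtaRun {Sig : Type} {rk : Sig → ℕ} {F : Type} [Field F] {S : Type} [Fintype S]
    (μ : ∀ σ : Sig, Matrix (Fin (rk σ) → S) S F) : RTree Sig rk → S → F
  | .node σ ts => Matrix.vecMul (fun i => ∏ l, mtaRun μ (ts l) (i l)) (μ σ)

/-- let `A = (n,Σ,μ,γ)` be the hypothesis automaton built from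
rows `X = {t₁,…,t_n}` and columns `Y ∋ □` via `μ(σ)·H_{X,Y} = H_{σ(X,…,X),Y}` and
`γ = H_{X,□}`.  If `z` is a counterexample (`‖A‖(z) ≠ f(z)`), then `z` has a
subtree `σ(τ₁,…,τ_k)` such that (i) `H_{τ_j,Y} = μ(τ_j)·H_{X,Y}` for all `j`,
and (ii) `H_{σ(τ₁,…,τ_k),c} ≠ μ(σ(τ₁,…,τ_k))·H_{X,c}` for some `c ∈ Y`. -/
theorem counterexample_has_bad_subtree {Sig : Type} {rk : Sig → ℕ} {F : Type}
    [Field F] {n : ℕ} {ι : Type} (f : RTree Sig rk → F)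
    (t : Fin n → RTree Sig rk) (Y : ι → Ctxt Sig rk)
    (hhole : ∃ y₀, Y y₀ = Ctxt.hole)
    (μ : ∀ σ : Sig, Matrix (Fin (rk σ) → Fin n) (Fin n) F)
    (hμ : ∀ σ : Sig,
      μ σ * Matrix.of (fun i y => f (plug (Y y) (t i))) =
        Matrix.of (fun idx y => f (plug (Y y) (RTree.node σ (fun l => t (idx l))))))
    (z : RTree Sig rk)
    (hz : (∑ i, mtaRun μ z i * f (t i)) ≠ f z) :
    ∃ (σ : Sig) (τ : Fin (rk σ) → RTree Sig rk),
      RTree.node σ τ ∈ subtrees z ∧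
      (∀ (j : Fin (rk σ)) (y : ι),
        f (plug (Y y) (τ j)) = ∑ i, mtaRun μ (τ j) i * f (plug (Y y) (t i))) ∧
      (∃ y : ι,
        f (plug (Y y) (RTree.node σ τ)) ≠
          ∑ i, mtaRun μ (RTree.node σ τ) i * f (plug (Y y) (t i))) := by
  by_contra h
  push_neg at h
  -- Show by induction: every subtree (in particular z) satisfies the equality for all y.
  have key : ∀ z' : RTree Sig rk, subtrees z' ⊆ subtrees z →
      ∀ y : ι, f (plug (Y y) z') = ∑ i, mtaRun μ z' i * f (plug (Y y) (t i)) := by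
    intro z'
    induction z' with
    | node σ ts ih =>
      intro hsub y
      have hself : RTree.node σ ts ∈ subtrees z := by
        apply hsub
        simp [subtrees]
      have hchild : ∀ l, ∀ y : ι,
          f (plug (Y y) (ts l)) = ∑ i, mtaRun μ (ts l) i * f (plug (Y y) (t i)) := by
        intro l
        apply ih l
        intro u hu
        apply hsub
        simp only [subtrees, Set.mem_insert_iff]
        exact Or.inr (Set.mem_iUnion.2 ⟨l, hu⟩)
      have := h σ ts hself (fun j y => hchild j y)
      exact this y
  obtain ⟨y₀, hy₀⟩ := hhole
  have := key z (fun _ hu => hu) y₀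
  rw [hy₀] at this
  simp only [plug] at this
  exact hz this.symm
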